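/- arXiv:2001.01666 — 2 statements merged into one kernel-verified Lean document; each statement's English description precedes it below -/
import Mathlib

section
/- Let Z be a metric space and let C₁, …, C_K be pairwise disjoint nonempty bounded subsets of Z with max_i diam(C_i) ≤ η/2 and min_{i≠j} d_H(C_i, C_j) ≥ δ, where δ > η > 0. Let X, Y ⊆ C₁ ∪ ⋯ ∪ C_K and let R ⊆ X × Y be a relation such that |d_Z(x₁, x₂) − d_Z(y₁, y₂)| < δ − η for all (x₁, y₁), (x₂, y₂) ∈ R. Then R preserves clusters: for all (x₁, y₁), (x₂, y₂) ∈ R, the points x₁ and x₂ lie in the same cluster C_i if and only if y₁ and y₂ lie in the same cluster C_j. -/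
lemma cluster_aux {Z : Type*} [MetricSpace Z] {K : ℕ} (C : Fin K → Set Z)
    (hbd : ∀ i, Bornology.IsBounded (C i))
    (η δ : ℝ) (hδη : η < δ)
    (hdiam : ∀ i, Metric.diam (C i) ≤ η / 2)
    (hsep : ∀ i j, i ≠ j → δ ≤ Metric.hausdorffDist (C i) (C j))
    {x₁ x₂ y₁ y₂ : Z} (hy₁ : y₁ ∈ ⋃ i, C i) (hy₂ : y₂ ∈ ⋃ i, C i)
    (hd : |dist x₁ x₂ - dist y₁ y₂| < δ - η)
    (hx : ∃ i, x₁ ∈ C i ∧ x₂ ∈ C i) : ∃ j, y₁ ∈ C j ∧ y₂ ∈ C j := by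
  obtain ⟨i, hx₁, hx₂⟩ := hx
  obtain ⟨j, hj⟩ := Set.mem_iUnion.1 hy₁
  obtain ⟨j', hj'⟩ := Set.mem_iUnion.1 hy₂
  rcases eq_or_ne j j' with rfl | hjj'
  · exact ⟨j, hj, hj'⟩
  exfalso
  have hx12 : dist x₁ x₂ ≤ η / 2 :=
    (Metric.dist_le_diam_of_mem (hbd i) hx₁ hx₂).trans (hdiam i)
  have hy12 : dist y₁ y₂ < δ - η / 2 := by
    have := abs_lt.1 hd
    linarith [this.1]
  -- Hausdorff distance bound
  have hH : Metric.hausdorffDist (C j) (C j') ≤ dist y₁ y₂ + η / 2 := by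
    apply Metric.hausdorffDist_le_of_mem_dist
    · have h0 := dist_nonneg (x := y₁) (y := y₂)
      have h1 := Metric.diam_nonneg (s := C i)
      linarith [hdiam i]
    · intro a ha
      refine ⟨y₂, hj', ?_⟩
      have h1 : dist a y₁ ≤ η / 2 :=
        (Metric.dist_le_diam_of_mem (hbd j) ha hj).trans (hdiam j)
      calc dist a y₂ ≤ dist a y₁ + dist y₁ y₂ := dist_triangle _ _ _
        _ ≤ dist y₁ y₂ + η / 2 := by linarith
    · intro b hb
      refine ⟨y₁, hj, ?_⟩
      have h1 : dist b y₂ ≤ η / 2 :=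
        (Metric.dist_le_diam_of_mem (hbd j') hb hj').trans (hdiam j')
      calc dist b y₁ ≤ dist b y₂ + dist y₂ y₁ := dist_triangle _ _ _
        _ ≤ dist y₁ y₂ + η / 2 := by rw [dist_comm y₂ y₁]; linarith
  have := hsep j j' hjj'
  linarith


/-- With pairwise disjoint nonempty bounded clusters of diameter
at most `η/2`, pairwise Hausdorff distance at least `δ`, and `δ > η > 0`: any
relation `R ⊆ X × Y` whose pointwise distortion is `< δ − η` preserves
clusters, i.e. for `(x₁,y₁), (x₂,y₂) ∈ R`, the points `x₁, x₂` lie in a common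
cluster iff `y₁, y₂` do. -/
theorem stmt_11 {Z : Type*} [MetricSpace Z] (K : ℕ) (C : Fin K → Set Z)
    (hdisj : Pairwise (Function.onFun Disjoint C))
    (hne : ∀ i, (C i).Nonempty)
    (hbd : ∀ i, Bornology.IsBounded (C i))
    (η δ : ℝ) (hηpos : 0 < η) (hδη : η < δ)
    (hdiam : ∀ i, Metric.diam (C i) ≤ η / 2)
    (hsep : ∀ i j, i ≠ j → δ ≤ Metric.hausdorffDist (C i) (C j))
    (X Y : Set Z) (hX : X ⊆ ⋃ i, C i) (hY : Y ⊆ ⋃ i, C i)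
    (R : Set (Z × Z)) (hR : R ⊆ X ×ˢ Y)
    (hdis : ∀ p ∈ R, ∀ q ∈ R, |dist p.1 q.1 - dist p.2 q.2| < δ - η) :
    ∀ p ∈ R, ∀ q ∈ R,
      (∃ i, p.1 ∈ C i ∧ q.1 ∈ C i) ↔ (∃ j, p.2 ∈ C j ∧ q.2 ∈ C j) := by
  intro p hp q hq
  have hpX := hR hp
  have hqX := hR hq
  constructor
  · exact cluster_aux C hbd η δ hδη hdiam hsep (hY hpX.2) (hY hqX.2)
      (hdis p hp q hq)
  · refine cluster_aux C hbd η δ hδη hdiam hsep (hX hpX.1) (hX hqX.1) ?_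
    rw [abs_sub_comm]; exact hdis p hp q hq
end

section
/- Let E be a real inner product space (e.g., Euclidean space ℝⁿ) and let C₁, …, C_K be pairwise disjoint nonempty finite subsets of E with max_i diam(C_i) ≤ η/2 and min_{i≠j} d_H(C_i, C_j) ≥ δ, where δ > η > 0. Then every point is strictly closer to the centroid of its own cluster than to any point of a different cluster: for all i ≠ j, x ∈ C_i and y ∈ C_j, one has ‖x − (1/|C_i|) ∑_{s ∈ C_i} s‖ < ‖x − y‖. -/
/-!
The centroid of a finite set is a convex combination of its points, so it lies in every closed
ball centred at a point of the set whose radius is the diameter. On the other hand, two sets of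
diameter at most `η / 2` containing points `x` and `y` are within Hausdorff distance
`dist x y + η / 2`, so `δ`-separation forces `dist x y ≥ δ - η / 2 > η / 2`.
-/

open Metric Bornology

theorem norm_sub_centroid_le_diam {E : Type*} [SeminormedAddCommGroup E] [NormedSpace ℝ E]
    {s : Finset E} {x : E} (hx : x ∈ s) :
    ‖x - ((s.card : ℝ)⁻¹ • ∑ z ∈ s, z)‖ ≤ diam (s : Set E) := by
  have hcard : (s.card : ℝ) ≠ 0 := by exact_mod_cast (Finset.card_pos.mpr ⟨x, hx⟩).ne'
  have hmem : ∑ z ∈ s, (s.card : ℝ)⁻¹ • z ∈ closedBall x (diam (s : Set E)) :=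
    (convex_closedBall x _).sum_mem (fun _ _ => by positivity)
      (by rw [Finset.sum_const, nsmul_eq_mul, mul_inv_cancel₀ hcard])
      (fun z hz => mem_closedBall.mpr <|
        dist_le_diam_of_mem s.finite_toSet.isBounded (Finset.mem_coe.mpr hz) hx)
  rw [← Finset.smul_sum, mem_closedBall, dist_comm, dist_eq_norm] at hmem
  exact hmem

theorem Metric.hausdorffDist_le_dist_add_max_diam {α : Type*} [PseudoMetricSpace α]
    {A B : Set α} (hA : IsBounded A) (hB : IsBounded B) {x y : α} (hx : x ∈ A) (hy : y ∈ B) :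
    hausdorffDist A B ≤ dist x y + max (diam A) (diam B) := by
  refine hausdorffDist_le_of_mem_dist (by positivity) (fun a ha => ⟨y, hy, ?_⟩)
    (fun b hb => ⟨x, hx, ?_⟩)
  · calc dist a y ≤ dist a x + dist x y := dist_triangle a x y
      _ ≤ diam A + dist x y := by gcongr; exact dist_le_diam_of_mem hA ha hx
      _ ≤ dist x y + max (diam A) (diam B) := by linarith [le_max_left (diam A) (diam B)]
  · calc dist b x ≤ dist b y + dist y x := dist_triangle b y x
      _ ≤ diam B + dist x y := by
          rw [dist_comm y x]; gcongr; exact dist_le_diam_of_mem hB hb hy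
      _ ≤ dist x y + max (diam A) (diam B) := by linarith [le_max_right (diam A) (diam B)]

theorem stmt_13_general {E : Type*} [NormedAddCommGroup E] [InnerProductSpace ℝ E]
    (K : ℕ) (C : Fin K → Finset E)
    (η δ : ℝ) (hδη : η < δ)
    (hdiam : ∀ i, Metric.diam (C i : Set E) ≤ η / 2)
    (hsep : ∀ i j, i ≠ j → δ ≤ Metric.hausdorffDist (C i : Set E) (C j : Set E)) :
    ∀ i j, i ≠ j → ∀ x ∈ C i, ∀ y ∈ C j,
      ‖x - ((C i).card : ℝ)⁻¹ • ∑ s ∈ C i, s‖ < ‖x - y‖ := by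
  intro i j hij x hx y hy
  have hsep_xy : δ ≤ dist x y + η / 2 :=
    calc δ ≤ hausdorffDist (C i : Set E) (C j : Set E) := hsep i j hij
      _ ≤ dist x y + max (diam (C i : Set E)) (diam (C j : Set E)) :=
          hausdorffDist_le_dist_add_max_diam (C i).finite_toSet.isBounded
            (C j).finite_toSet.isBounded hx hy
      _ ≤ dist x y + η / 2 := by gcongr; exact max_le (hdiam i) (hdiam j)
  calc ‖x - ((C i).card : ℝ)⁻¹ • ∑ s ∈ C i, s‖ ≤ diam (C i : Set E) := norm_sub_centroid_le_diam hx
    _ ≤ η / 2 := hdiam i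
    _ < dist x y := by linarith
    _ = ‖x - y‖ := dist_eq_norm x y

/-- In a real inner product space, for pairwise disjoint nonempty
finite clusters with `max diam ≤ η/2`, pairwise Hausdorff distance at least
`δ`, and `δ > η > 0`, every point is strictly closer to the centroid of its own
cluster than to any point of a different cluster. -/
theorem stmt_13 {E : Type*} [NormedAddCommGroup E] [InnerProductSpace ℝ E]
    (K : ℕ) (C : Fin K → Finset E)
    (hdisj : Pairwise (Function.onFun Disjoint C))
    (hne : ∀ i, (C i).Nonempty)
    (η δ : ℝ) (hηpos : 0 < η) (hδη : η < δ)
    (hdiam : ∀ i, Metric.diam (C i : Set E) ≤ η / 2)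
    (hsep : ∀ i j, i ≠ j → δ ≤ Metric.hausdorffDist (C i : Set E) (C j : Set E)) :
    ∀ i j, i ≠ j → ∀ x ∈ C i, ∀ y ∈ C j,
      ‖x - ((C i).card : ℝ)⁻¹ • ∑ s ∈ C i, s‖ < ‖x - y‖ :=
  stmt_13_general K C η δ hδη hdiam hsep
end
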